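/- Let r = 2^n and let u_0, ..., u_{2^n−1} ∈ {−1,+1}^{2^n} be the pairwise orthogonal vectors from the Sylvester–Hadamard construction. Then ∑_{k=0}^{2^n−1} Toep(u_k)ᵀ Toep(u_k) = 2^n · diag(2^n, 2^n−1, ..., 1). -/

import Mathlib

open Matrix

/-- Lower-triangular Toeplitz matrix with first column `v`. -/
def ToepR {T : ℕ} (v : Fin T → ℝ) : Matrix (Fin T) (Fin T) ℝ :=
  fun k ℓ => if (ℓ : ℕ) ≤ (k : ℕ) then
    v ⟨(k : ℕ) - (ℓ : ℕ), lt_of_le_of_lt (Nat.sub_le _ _) k.isLt⟩ else 0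

/-- The `k`-th vector of the Sylvester--Hadamard construction of `2^n` pairwise
orthogonal vectors in `{-1,+1}^{2^n}`: the `i`-th entry is `(-1)` raised to the
bitwise inner product of `k` and `i`. -/
def sylvester (n : ℕ) (k : Fin (2 ^ n)) : Fin (2 ^ n) → ℝ := fun i =>
  (-1 : ℝ) ^ (∑ j ∈ Finset.range n,
    if Nat.testBit (k : ℕ) j && Nat.testBit (i : ℕ) j then 1 else 0)


/-!
Entry `(i, j)` of the sum is `∑_{m ≥ max i j} ∑_k u_k(m - i) u_k(m - j)`, so only the Gram
matrix of the columns of the Sylvester matrix enters; that matrix is `2^n • 1`, which makes the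
entry `2^n` times the number of `m ≥ i` when `i = j`, and `0` otherwise. The Sylvester matrix is
symmetric and is the `n`-fold Kronecker power of `!![1, 1; 1, -1]`: reading indices in binary, its
entries are `∏_j (-1)^(k_j i_j)`, so its inner products factor into those of the `2 × 2` matrix.
-/

section Toeplitz

variable {ι : Type*} [Fintype ι] {T : ℕ}

lemma sum_toepR_mul_toepR_of_transpose_mul_self (u : ι → Fin T → ℝ) {c : ℝ}
    (hu : (of u)ᵀ * of u = c • 1) (m i j : Fin T) :
    ∑ k, ToepR (u k) m i * ToepR (u k) m j = if i ≤ m ∧ i = j then c else 0 := by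
  by_cases hi : i ≤ m
  · by_cases hj : j ≤ m
    · have huij := congr_fun₂ hu ⟨m - i, by omega⟩ ⟨m - j, by omega⟩
      simp only [mul_apply, transpose_apply, of_apply, Matrix.smul_apply, one_apply] at huij
      simp only [ToepR, Fin.val_fin_le.mpr hi, Fin.val_fin_le.mpr hj, if_true, huij]
      simp [Fin.ext_iff, hi, show (m : ℕ) - i = m - j ↔ (i : ℕ) = j by omega]
    · have hij : i ≠ j := by rintro rfl; exact hj hi
      simp [ToepR, hj, Fin.val_fin_le, hij]
  · simp [ToepR, hi, Fin.val_fin_le]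

theorem sum_transpose_toepR_mul_toepR (u : ι → Fin T → ℝ) {c : ℝ}
    (hu : (of u)ᵀ * of u = c • 1) :
    ∑ k, (ToepR (u k))ᵀ * ToepR (u k) = c • diagonal (fun i : Fin T => (T : ℝ) - i) := by
  ext i j
  simp only [Matrix.sum_apply, mul_apply, transpose_apply]
  rw [Finset.sum_comm]
  simp only [sum_toepR_mul_toepR_of_transpose_mul_self u hu, Matrix.smul_apply, diagonal_apply]
  obtain rfl | hij := eq_or_ne i j
  · simp only [and_true, if_true]
    rw [← Finset.sum_filter, Finset.filter_le_eq_Ici, Finset.sum_const, Fin.card_Ici,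
      nsmul_eq_mul, Nat.cast_sub i.is_lt.le, smul_eq_mul, mul_comm]
  · simp [hij]

end Toeplitz

lemma ite_testBit_and_testBit (a b j : ℕ) :
    (if Nat.testBit a j && Nat.testBit b j then 1 else 0) = a / 2 ^ j % 2 * (b / 2 ^ j % 2) := by
  simp only [Nat.testBit_eq_decide_div_mod_eq]
  rcases Nat.mod_two_eq_zero_or_one (a / 2 ^ j) with ha | ha <;>
    rcases Nat.mod_two_eq_zero_or_one (b / 2 ^ j) with hb | hb <;> simp [ha, hb]

lemma sylvester_eq_prod (n : ℕ) (k i : Fin (2 ^ n)) :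
    sylvester n k i = ∏ j : Fin n,
      (-1 : ℝ) ^ ((finFunctionFinEquiv.symm k j : ℕ) * finFunctionFinEquiv.symm i j) := by
  simp only [sylvester, finFunctionFinEquiv_symm_apply_val, ← ite_testBit_and_testBit,
    Finset.prod_pow_eq_pow_sum]
  rw [Fin.sum_univ_eq_sum_range (fun j => if Nat.testBit k j && Nat.testBit i j then 1 else 0)]

lemma sum_neg_one_pow_mul_neg_one_pow (x y : Fin 2) :
    ∑ z : Fin 2, (-1 : ℝ) ^ ((x : ℕ) * z) * (-1) ^ ((y : ℕ) * z) = if x = y then 2 else 0 := by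
  fin_cases x <;> fin_cases y <;> norm_num [Fin.sum_univ_two]

lemma sylvester_orthogonal (n : ℕ) (a b : Fin (2 ^ n)) :
    ∑ i, sylvester n a i * sylvester n b i = if a = b then 2 ^ n else 0 := by
  simp only [sylvester_eq_prod, ← Finset.prod_mul_distrib]
  rw [← finFunctionFinEquiv.sum_comp]
  simp only [Equiv.symm_apply_apply]
  rw [← Fintype.prod_sum fun j (z : Fin 2) => (-1 : ℝ) ^ ((finFunctionFinEquiv.symm a j : ℕ) * z) *
    (-1) ^ ((finFunctionFinEquiv.symm b j : ℕ) * z)]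
  simp only [sum_neg_one_pow_mul_neg_one_pow, Finset.prod_ite_zero, Finset.prod_const, Finset.card_univ,
    Fintype.card_fin, Finset.mem_univ, forall_const, ← funext_iff, EmbeddingLike.apply_eq_iff_eq]

lemma sylvester_comm (n : ℕ) (k i : Fin (2 ^ n)) : sylvester n k i = sylvester n i k := by
  simp only [sylvester, Bool.and_comm]

lemma sylvester_transpose_mul_self (n : ℕ) :
    (of (sylvester n))ᵀ * of (sylvester n) = (2 ^ n : ℝ) • 1 := by
  ext a b
  simp only [mul_apply, transpose_apply, of_apply, sylvester_comm n _ a, sylvester_comm n _ b,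
    sylvester_orthogonal, Matrix.smul_apply, one_apply, smul_eq_mul, mul_ite, mul_one, mul_zero]

theorem sylvester_toeplitz_gram (n : ℕ) :
    ∑ k : Fin (2 ^ n), (ToepR (sylvester n k)).transpose * ToepR (sylvester n k) =
      ((2 : ℝ) ^ n) • Matrix.diagonal (fun i : Fin (2 ^ n) => (2 : ℝ) ^ n - (i : ℕ)) := by
  exact_mod_cast sum_transpose_toepR_mul_toepR (sylvester n) (sylvester_transpose_mul_self n)
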